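/- arXiv:2105.08539 — 2 statements merged into one kernel-verified Lean document; each statement's English description precedes it below -/
import Mathlib

section
/- (Switching lemma.) Let s be a real number with s > −1, let k be a positive integer, set t := s + k, let n ≥ 1 be an integer, and let μ be a real number with μ + s > 2. Define, for this real pair (s,t), E_{s,t}^μ(n) := det( B(μ+i+j+s+t−4, j+t−1) − δ_{i,j+k} )_{1≤i,j≤n} and E_{t,s}^μ(n) := det( B(μ+i+j+s+t−4, j+s−1) − δ_{j,i+k} )_{1≤i,j≤n}, and likewise D_{s,t}^μ(n) and D_{t,s}^μ(n) with + in place of −. Then E_{s,t}^μ(n) = ( ∏_{i=0}^{k−1} (μ+s+i−1)_n / (i+s+1)_n ) · E_{t,s}^μ(n), and the same identity holds with D in place of E. -/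
open Finset

/-- The Gamma-binomial `B(x,y) = Γ(x+1)/(Γ(x-y+1)·Γ(y+1))`. -/
noncomputable def gbinom (x y : ℝ) : ℝ :=
  Real.Gamma (x + 1) / (Real.Gamma (x - y + 1) * Real.Gamma (y + 1))

/-- The rising factorial (Pochhammer symbol) `(a)_b = a(a+1)⋯(a+b-1)`. -/
noncomputable def poch (a : ℝ) (b : ℕ) : ℝ := (ascPochhammer ℝ b).eval a

lemma poch_eq_prod (a : ℝ) (b : ℕ) : poch a b = ∏ i ∈ range b, (a + i) := by
  induction b with
  | zero => simp [poch]
  | succ m ih =>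
    rw [poch, ascPochhammer_succ_eval, ← poch, ih, Finset.prod_range_succ]

lemma poch_pos {a : ℝ} (ha : 0 < a) (b : ℕ) : 0 < poch a b := by
  rw [poch_eq_prod]
  exact Finset.prod_pos fun i _ => by positivity

lemma Gamma_add_nat' {a : ℝ} (ha : 0 < a) (b : ℕ) :
    Real.Gamma (a + b) = poch a b * Real.Gamma a := by
  induction b with
  | zero => simp [poch]
  | succ m ih =>
    have h : a + (m : ℝ) ≠ 0 := by positivity
    have hp : poch a (m + 1) = poch a m * (a + m) := by
      rw [poch_eq_prod, poch_eq_prod, Finset.prod_range_succ]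
    rw [show a + ((m + 1 : ℕ) : ℝ) = (a + m) + 1 by push_cast; ring,
      Real.Gamma_add_one h, ih, hp]
    ring

lemma entry (μ s : ℝ) (k : ℕ) (hs : -1 < s) (hμ : 2 < μ + s) (ε a b d : ℝ)
    (ha : 1 ≤ a) (hb : 1 ≤ b) (hd : d ≠ 0 → a = b + k) :
    gbinom (μ + a + b + s + (s + k) - 4) (b + (s + k) - 1) + ε * d =
      Real.Gamma (a + s) / Real.Gamma (μ + a + s - 2) *
        (Real.Gamma (μ + b + s + k - 2) / Real.Gamma (b + s + k) *
          (gbinom (μ + b + a + s + (s + k) - 4) (a + s - 1) + ε * d)) := by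
  have hk0 : (0:ℝ) ≤ (k : ℝ) := Nat.cast_nonneg k
  simp only [gbinom]
  rw [show μ + a + b + s + (s + (k:ℝ)) - 4 + 1 = μ + a + b + s + s + (k:ℝ) - 3 by ring,
    show μ + a + b + s + (s + (k:ℝ)) - 4 - (b + (s + (k:ℝ)) - 1) + 1 = μ + a + s - 2 by ring,
    show b + (s + (k:ℝ)) - 1 + 1 = b + s + (k:ℝ) by ring,
    show μ + b + a + s + (s + (k:ℝ)) - 4 + 1 = μ + a + b + s + s + (k:ℝ) - 3 by ring,
    show μ + b + a + s + (s + (k:ℝ)) - 4 - (a + s - 1) + 1 = μ + b + s + (k:ℝ) - 2 by ring,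
    show a + s - 1 + 1 = a + s by ring]
  by_cases hd0 : d = 0
  · rw [hd0]
    have h1 : Real.Gamma (a + s) ≠ 0 := (Real.Gamma_pos_of_pos (by linarith)).ne'
    have h2 : Real.Gamma (μ + a + s - 2) ≠ 0 := (Real.Gamma_pos_of_pos (by linarith)).ne'
    have h3 : Real.Gamma (b + s + (k:ℝ)) ≠ 0 := (Real.Gamma_pos_of_pos (by linarith)).ne'
    have h4 : Real.Gamma (μ + b + s + (k:ℝ) - 2) ≠ 0 := (Real.Gamma_pos_of_pos (by linarith)).ne'
    field_simp
    ring
  · have hab := hd hd0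
    subst hab
    have h3 : Real.Gamma (b + s + (k:ℝ)) ≠ 0 := (Real.Gamma_pos_of_pos (by linarith)).ne'
    have h4 : Real.Gamma (μ + b + s + (k:ℝ) - 2) ≠ 0 := (Real.Gamma_pos_of_pos (by linarith)).ne'
    rw [show b + (k:ℝ) + s = b + s + (k:ℝ) by ring,
      show μ + (b + (k:ℝ)) + s - 2 = μ + b + s + (k:ℝ) - 2 by ring]
    field_simp

lemma prodrc (μ s : ℝ) (hs : -1 < s) (hμ : 2 < μ + s) (k n : ℕ) :
    (∏ i : Fin n, Real.Gamma (((i.1 + 1 : ℕ) : ℝ) + s) /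
        Real.Gamma (μ + ((i.1 + 1 : ℕ) : ℝ) + s - 2)) *
      (∏ j : Fin n, Real.Gamma (μ + ((j.1 + 1 : ℕ) : ℝ) + s + k - 2) /
        Real.Gamma (((j.1 + 1 : ℕ) : ℝ) + s + k)) =
    ∏ i ∈ Finset.range k, poch (μ + s + i - 1) n / poch ((i : ℝ) + s + 1) n := by
  rw [Fin.prod_univ_eq_prod_range (fun m : ℕ => Real.Gamma (((m + 1 : ℕ) : ℝ) + s) /
        Real.Gamma (μ + ((m + 1 : ℕ) : ℝ) + s - 2)) n,
    Fin.prod_univ_eq_prod_range (fun m : ℕ => Real.Gamma (μ + ((m + 1 : ℕ) : ℝ) + s + k - 2) /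
        Real.Gamma (((m + 1 : ℕ) : ℝ) + s + k)) n,
    ← Finset.prod_mul_distrib]
  have step : ∀ m ∈ range n,
      (Real.Gamma (((m + 1 : ℕ) : ℝ) + s) / Real.Gamma (μ + ((m + 1 : ℕ) : ℝ) + s - 2)) *
        (Real.Gamma (μ + ((m + 1 : ℕ) : ℝ) + s + k - 2) / Real.Gamma (((m + 1 : ℕ) : ℝ) + s + k))
      = poch (μ + ((m + 1 : ℕ) : ℝ) + s - 2) k / poch (((m + 1 : ℕ) : ℝ) + s) k := by
    intro m _
    have hm1 : (1:ℝ) ≤ ((m + 1 : ℕ) : ℝ) := by exact_mod_cast Nat.succ_le_succ (Nat.zero_le m)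
    have pa : 0 < ((m + 1 : ℕ) : ℝ) + s := by linarith
    have pb : 0 < μ + ((m + 1 : ℕ) : ℝ) + s - 2 := by linarith
    have h1 : Real.Gamma (((m + 1 : ℕ) : ℝ) + s + k)
        = poch (((m + 1 : ℕ) : ℝ) + s) k * Real.Gamma (((m + 1 : ℕ) : ℝ) + s) :=
      Gamma_add_nat' pa k
    have h2 : Real.Gamma (μ + ((m + 1 : ℕ) : ℝ) + s + k - 2)
        = poch (μ + ((m + 1 : ℕ) : ℝ) + s - 2) k * Real.Gamma (μ + ((m + 1 : ℕ) : ℝ) + s - 2) := by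
      rw [show μ + ((m + 1 : ℕ) : ℝ) + s + (k:ℝ) - 2 = μ + ((m + 1 : ℕ) : ℝ) + s - 2 + (k:ℝ) by ring]
      exact Gamma_add_nat' pb k
    have g1 : Real.Gamma (((m + 1 : ℕ) : ℝ) + s) ≠ 0 := (Real.Gamma_pos_of_pos pa).ne'
    have g2 : Real.Gamma (μ + ((m + 1 : ℕ) : ℝ) + s - 2) ≠ 0 := (Real.Gamma_pos_of_pos pb).ne'
    have p1 : poch (((m + 1 : ℕ) : ℝ) + s) k ≠ 0 := (poch_pos pa k).ne'
    rw [h1, h2, div_mul_div_comm, div_eq_div_iff (mul_ne_zero g2 (mul_ne_zero p1 g1)) p1]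
    ring
  rw [Finset.prod_congr rfl step, Finset.prod_div_distrib, Finset.prod_div_distrib]
  congr 1
  · simp_rw [poch_eq_prod]
    rw [Finset.prod_comm]
    refine Finset.prod_congr rfl fun i _ => Finset.prod_congr rfl fun m _ => ?_
    push_cast
    ring
  · simp_rw [poch_eq_prod]
    rw [Finset.prod_comm]
    refine Finset.prod_congr rfl fun i _ => Finset.prod_congr rfl fun m _ => ?_
    push_cast
    ring

lemma key (μ s : ℝ) (hs : -1 < s) (hμ : 2 < μ + s) (k n : ℕ) (ε : ℝ) :
    Matrix.det (Matrix.of fun i j : Fin n =>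
      gbinom (μ + (i.1 + 1 : ℕ) + (j.1 + 1 : ℕ) + s + (s + k) - 4)
          ((j.1 + 1 : ℕ) + (s + k) - 1) +
        ε * (if i.1 = j.1 + k then (1:ℝ) else 0)) =
    (∏ i ∈ Finset.range k, poch (μ + s + i - 1) n / poch ((i : ℝ) + s + 1) n) *
    Matrix.det (Matrix.of fun i j : Fin n =>
      gbinom (μ + (i.1 + 1 : ℕ) + (j.1 + 1 : ℕ) + s + (s + k) - 4)
          ((j.1 + 1 : ℕ) + s - 1) +
        ε * (if j.1 = i.1 + k then (1:ℝ) else 0)) := by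
  set B : Matrix (Fin n) (Fin n) ℝ := Matrix.of fun i j : Fin n =>
      gbinom (μ + (i.1 + 1 : ℕ) + (j.1 + 1 : ℕ) + s + (s + k) - 4)
          ((j.1 + 1 : ℕ) + s - 1) +
        ε * (if j.1 = i.1 + k then (1:ℝ) else 0) with hB
  have hM : (Matrix.of fun i j : Fin n =>
      gbinom (μ + (i.1 + 1 : ℕ) + (j.1 + 1 : ℕ) + s + (s + k) - 4)
          ((j.1 + 1 : ℕ) + (s + k) - 1) +
        ε * (if i.1 = j.1 + k then (1:ℝ) else 0)) =
      Matrix.of (fun i j : Fin n =>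
        (Real.Gamma (((i.1 + 1 : ℕ) : ℝ) + s) / Real.Gamma (μ + ((i.1 + 1 : ℕ) : ℝ) + s - 2)) *
          (Matrix.of (fun i j : Fin n =>
            (Real.Gamma (μ + ((j.1 + 1 : ℕ) : ℝ) + s + k - 2) /
              Real.Gamma (((j.1 + 1 : ℕ) : ℝ) + s + k)) * B.transpose i j)) i j) := by
    ext i j
    simp only [Matrix.of_apply, Matrix.transpose_apply, hB]
    refine entry μ s k hs hμ ε _ _ _ ?_ ?_ ?_
    · exact_mod_cast Nat.succ_le_succ (Nat.zero_le i.1)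
    · exact_mod_cast Nat.succ_le_succ (Nat.zero_le j.1)
    · intro h
      by_cases hc : i.1 = j.1 + k
      · rw [hc]; push_cast; ring
      · simp [hc] at h
  rw [hM, Matrix.det_mul_column, Matrix.det_mul_row, Matrix.det_transpose, ← mul_assoc,
    prodrc μ s hs hμ k n]

/-- The determinant `E_{s,t}^μ(n)` for real parameters `s` and `t = s + k`,
with entries `B(μ+i+j+s+t-4, j+t-1) - δ_{i,j+k}`. -/
noncomputable def detEst (μ s : ℝ) (k : ℕ) (n : ℕ) : ℝ :=
  Matrix.det (Matrix.of fun i j : Fin n =>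
    gbinom (μ + (i.1 + 1 : ℕ) + (j.1 + 1 : ℕ) + s + (s + k) - 4)
        ((j.1 + 1 : ℕ) + (s + k) - 1) -
      if i.1 = j.1 + k then 1 else 0)

/-- The determinant `E_{t,s}^μ(n)` for real parameters `t = s + k` and `s`,
with entries `B(μ+i+j+s+t-4, j+s-1) - δ_{j,i+k}`. -/
noncomputable def detEts (μ s : ℝ) (k : ℕ) (n : ℕ) : ℝ :=
  Matrix.det (Matrix.of fun i j : Fin n =>
    gbinom (μ + (i.1 + 1 : ℕ) + (j.1 + 1 : ℕ) + s + (s + k) - 4)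
        ((j.1 + 1 : ℕ) + s - 1) -
      if j.1 = i.1 + k then 1 else 0)

/-- The determinant `D_{s,t}^μ(n)` for real parameters `s` and `t = s + k`. -/
noncomputable def detDst (μ s : ℝ) (k : ℕ) (n : ℕ) : ℝ :=
  Matrix.det (Matrix.of fun i j : Fin n =>
    gbinom (μ + (i.1 + 1 : ℕ) + (j.1 + 1 : ℕ) + s + (s + k) - 4)
        ((j.1 + 1 : ℕ) + (s + k) - 1) +
      if i.1 = j.1 + k then 1 else 0)

/-- The determinant `D_{t,s}^μ(n)` for real parameters `t = s + k` and `s`. -/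
noncomputable def detDts (μ s : ℝ) (k : ℕ) (n : ℕ) : ℝ :=
  Matrix.det (Matrix.of fun i j : Fin n =>
    gbinom (μ + (i.1 + 1 : ℕ) + (j.1 + 1 : ℕ) + s + (s + k) - 4)
        ((j.1 + 1 : ℕ) + s - 1) +
      if j.1 = i.1 + k then 1 else 0)

/-- The switching lemma: `A_{s,t}^μ(n) = ∏_{i=0}^{k-1} (μ+s+i-1)_n/(i+s+1)_n · A_{t,s}^μ(n)`
for `A ∈ {E, D}`, where `t = s + k`. -/
theorem switching_lemma (s : ℝ) (hs : -1 < s) (k : ℕ) (hk : 1 ≤ k) (n : ℕ) (hn : 1 ≤ n)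
    (μ : ℝ) (hμ : 2 < μ + s) :
    (detEst μ s k n =
        (∏ i ∈ Finset.range k, poch (μ + s + i - 1) n / poch ((i : ℝ) + s + 1) n) *
          detEts μ s k n) ∧
    (detDst μ s k n =
        (∏ i ∈ Finset.range k, poch (μ + s + i - 1) n / poch ((i : ℝ) + s + 1) n) *
          detDts μ s k n) := by
  constructor
  · have h := key μ s hs hμ k n (-1)
    rw [detEst, detEts]
    have e1 : (Matrix.of fun i j : Fin n =>
        gbinom (μ + (i.1 + 1 : ℕ) + (j.1 + 1 : ℕ) + s + (s + k) - 4)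
            ((j.1 + 1 : ℕ) + (s + k) - 1) -
          if i.1 = j.1 + k then 1 else 0) =
        (Matrix.of fun i j : Fin n =>
        gbinom (μ + (i.1 + 1 : ℕ) + (j.1 + 1 : ℕ) + s + (s + k) - 4)
            ((j.1 + 1 : ℕ) + (s + k) - 1) +
          (-1) * (if i.1 = j.1 + k then (1:ℝ) else 0)) := by
      ext i j; simp only [Matrix.of_apply]; ring
    have e2 : (Matrix.of fun i j : Fin n =>
        gbinom (μ + (i.1 + 1 : ℕ) + (j.1 + 1 : ℕ) + s + (s + k) - 4)
            ((j.1 + 1 : ℕ) + s - 1) -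
          if j.1 = i.1 + k then 1 else 0) =
        (Matrix.of fun i j : Fin n =>
        gbinom (μ + (i.1 + 1 : ℕ) + (j.1 + 1 : ℕ) + s + (s + k) - 4)
            ((j.1 + 1 : ℕ) + s - 1) +
          (-1) * (if j.1 = i.1 + k then (1:ℝ) else 0)) := by
      ext i j; simp only [Matrix.of_apply]; ring
    rw [e1, e2]
    exact h
  · have h := key μ s hs hμ k n 1
    rw [detDst, detDts]
    have e1 : (Matrix.of fun i j : Fin n =>
        gbinom (μ + (i.1 + 1 : ℕ) + (j.1 + 1 : ℕ) + s + (s + k) - 4)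
            ((j.1 + 1 : ℕ) + (s + k) - 1) +
          if i.1 = j.1 + k then 1 else 0) =
        (Matrix.of fun i j : Fin n =>
        gbinom (μ + (i.1 + 1 : ℕ) + (j.1 + 1 : ℕ) + s + (s + k) - 4)
            ((j.1 + 1 : ℕ) + (s + k) - 1) +
          (1:ℝ) * (if i.1 = j.1 + k then (1:ℝ) else 0)) := by
      ext i j; simp only [Matrix.of_apply]; ring
    have e2 : (Matrix.of fun i j : Fin n =>
        gbinom (μ + (i.1 + 1 : ℕ) + (j.1 + 1 : ℕ) + s + (s + k) - 4)
            ((j.1 + 1 : ℕ) + s - 1) +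
          if j.1 = i.1 + k then 1 else 0) =
        (Matrix.of fun i j : Fin n =>
        gbinom (μ + (i.1 + 1 : ℕ) + (j.1 + 1 : ℕ) + s + (s + k) - 4)
            ((j.1 + 1 : ℕ) + s - 1) +
          (1:ℝ) * (if j.1 = i.1 + k then (1:ℝ) else 0)) := by
      ext i j; simp only [Matrix.of_apply]; ring
    rw [e1, e2]
    exact h
end

section
/- Let μ be a real number and m ≥ 1 an integer. Then the following Pochhammer product identity holds (in denominator-cleared form): 2^{(m−1)(m−2)/2} · ( ∏_{i=1}^{⌊m/2⌋} (μ/2+3i−1/2)_{m−2i} · (μ/2+2m−i)_{m−2i+1} ) · ∏_{i=1}^{m−1} (μ/2+i+1)_{i−1} = ∏_{i=1}^{m−1} [ (μ+2i+1)_{i−1} · (μ/2+2i+1)_i ]. -/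
/-!
Every Pochhammer symbol in the identity is a product of factors `(μ + d) / 2` with `d` running
through an arithmetic progression of natural numbers: of step 2 when the base is `(μ + a) / 2`,
and of step 1 when the base is `μ + a`, at the cost of one factor 2 per term, which accounts for
the power of two. Both sides thus become `∏ (μ + d) / 2` over a multiset of naturals `d`, and the
identity reduces to the equality of the two multisets. For a fixed `d`, each family contributes
the number of indices `i` in an interval whose endpoints are linear in `d` and `m` up to floors,
so the multiplicities agree by integer arithmetic, separately for even and odd `d`.
-/

open Finset

lemma poch_succ (a : ℝ) (n : ℕ) : poch a (n + 1) = poch a n * (a + n) :=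
  ascPochhammer_succ_eval n a

section

variable (μ : ℝ)

lemma poch_add_div_two_eq_prod_range' (a n : ℕ) :
    poch ((μ + a) / 2) n = ((List.range' a n 2).map fun d : ℕ => (μ + d) / 2).prod := by
  induction n with
  | zero => simp [poch]
  | succ n ih =>
    rw [poch_succ, ih, List.range'_concat, List.map_append, List.prod_append]
    simp only [List.map_cons, List.map_nil, List.prod_cons, List.prod_nil, mul_one]
    push_cast
    ring

lemma poch_add_eq_two_pow_mul_prod_range' (a n : ℕ) :
    poch (μ + a) n = 2 ^ n * ((List.range' a n).map fun d : ℕ => (μ + d) / 2).prod := by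
  induction n with
  | zero => simp [poch]
  | succ n ih =>
    rw [poch_succ, ih, List.range'_concat, List.map_append, List.prod_append]
    simp only [List.map_cons, List.map_nil, List.prod_cons, List.prod_nil, mul_one]
    push_cast
    ring

lemma prod_poch_eq_prod_map_sum_range' {ι : Type*} {s : Finset ι} {x : ι → ℝ} {a : ι → ℕ}
    (n : ι → ℕ) (hx : ∀ i ∈ s, x i = (μ + a i) / 2) :
    ∏ i ∈ s, poch (x i) (n i) =
      ((∑ i ∈ s, (List.range' (a i) (n i) 2 : Multiset ℕ)).map fun d : ℕ => (μ + d) / 2).prod := by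
  rw [← Multiset.coe_mapAddMonoidHom, map_sum, Multiset.prod_sum]
  refine prod_congr rfl fun i hi => ?_
  rw [hx i hi, poch_add_div_two_eq_prod_range']
  rfl

lemma prod_poch_eq_two_pow_mul_prod_map_sum_range' {ι : Type*} {s : Finset ι} {x : ι → ℝ}
    {a : ι → ℕ} (n : ι → ℕ) (hx : ∀ i ∈ s, x i = μ + a i) :
    ∏ i ∈ s, poch (x i) (n i) = 2 ^ (∑ i ∈ s, n i) *
      ((∑ i ∈ s, (List.range' (a i) (n i) : Multiset ℕ)).map fun d : ℕ => (μ + d) / 2).prod := by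
  rw [← Multiset.coe_mapAddMonoidHom, map_sum, Multiset.prod_sum, ← prod_pow_eq_pow_sum,
    ← prod_mul_distrib]
  refine prod_congr rfl fun i hi => ?_
  rw [hx i hi, poch_add_eq_two_pow_mul_prod_range']
  rfl

end

lemma mem_range'_iff_dvd {d a n r : ℕ} (hr : 0 < r) :
    d ∈ List.range' a n r ↔ a ≤ d ∧ d < a + r * n ∧ r ∣ d - a := by
  rw [List.mem_range']
  constructor
  · rintro ⟨j, hj, rfl⟩
    exact ⟨by omega, by simpa using Nat.mul_lt_mul_of_pos_left hj hr, by simp⟩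
  · rintro ⟨had, hdn, k, hk⟩
    exact ⟨k, Nat.lt_of_mul_lt_mul_left (a := r) (by omega), by omega⟩

lemma count_sum_range' {ι : Type*} {s : Finset ι} {a n : ι → ℕ} {r : ℕ} (hr : 0 < r) (d : ℕ) :
    (∑ i ∈ s, (List.range' (a i) (n i) r : Multiset ℕ)).count d =
      #{i ∈ s | a i ≤ d ∧ d < a i + r * n i ∧ r ∣ d - a i} := by
  classical
  rw [Multiset.count_sum', card_filter]
  refine sum_congr rfl fun i _ => ?_
  simp only [Multiset.count_eq_of_nodup (Multiset.coe_nodup.2 (List.nodup_range' r hr)),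
    Multiset.mem_coe, mem_range'_iff_dvd hr]

lemma card_filter_Icc_eq {lo hi lo' hi' : ℕ} {P : ℕ → Prop} [DecidablePred P]
    (h : ∀ i, (lo ≤ i ∧ i ≤ hi) ∧ P i ↔ lo' ≤ i ∧ i ≤ hi') :
    #{i ∈ Icc lo hi | P i} = hi' + 1 - lo' := by
  rw [← Nat.card_Icc lo' hi']
  congr 1
  ext i
  simpa only [mem_filter, mem_Icc] using h i

lemma sum_Icc_sub_one (n : ℕ) : ∑ i ∈ Icc 1 n, (i - 1) = n * (n - 1) / 2 := by
  rw [← Ico_add_one_right_eq_Icc, sum_Ico_eq_sum_range, ← sum_range_id, Nat.add_sub_cancel]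
  exact sum_congr rfl fun k _ => by omega

/-- The left side of `cancel_poch` is `2 ^ ((m - 1) * (m - 2) / 2) * ∏ (μ + d) / 2` over
`d ∈ leftShifts m`, and the right side is the same expression over `d ∈ rightShifts m`. -/
def leftShifts (m : ℕ) : Multiset ℕ :=
  (∑ i ∈ Icc 1 (m / 2), (List.range' (6 * i - 1) (m - 2 * i) 2 : Multiset ℕ)) +
    (∑ i ∈ Icc 1 (m / 2), (List.range' (4 * m - 2 * i) (m - 2 * i + 1) 2 : Multiset ℕ)) +
    ∑ i ∈ Icc 1 (m - 1), (List.range' (2 * i + 2) (i - 1) 2 : Multiset ℕ)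

def rightShifts (m : ℕ) : Multiset ℕ :=
  (∑ i ∈ Icc 1 (m - 1), (List.range' (2 * i + 1) (i - 1) : Multiset ℕ)) +
    ∑ i ∈ Icc 1 (m - 1), (List.range' (4 * i + 2) i 2 : Multiset ℕ)

/- Splitting `e` at `m`, `3m/2` and `2m` removes the `min`s from the interval endpoints;
`omega` still needs the residue of `e` mod 6 to handle the floors by 2 and 3. -/
lemma count_leftShifts_two_mul (m e : ℕ) :
    (leftShifts m).count (2 * e) = (rightShifts m).count (2 * e) := by
  simp only [leftShifts, rightShifts, Multiset.count_add, count_sum_range' two_pos,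
    count_sum_range' one_pos]
  have : e % 6 < 6 := e.mod_lt (by norm_num)
  rcases lt_or_ge e m with h₁ | h₁
  · rw [card_filter_Icc_eq (lo' := 1) (hi' := 0) (fun i => by omega),
      card_filter_Icc_eq (lo' := 1) (hi' := 0) (fun i => by omega),
      card_filter_Icc_eq (lo' := (e + 2) / 2) (hi' := e - 1) (fun i => by omega),
      card_filter_Icc_eq (lo' := (2 * e + 3) / 3) (hi' := e - 1) (fun i => by omega),
      card_filter_Icc_eq (lo' := max 1 ((e + 2) / 3)) (hi' := (e - 1) / 2) (fun i => by omega)]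
    interval_cases h : e % 6 <;> omega
  rcases lt_or_ge (2 * e) (3 * m) with h₂ | h₂
  · rw [card_filter_Icc_eq (lo' := 1) (hi' := 0) (fun i => by omega),
      card_filter_Icc_eq (lo' := 1) (hi' := 0) (fun i => by omega),
      card_filter_Icc_eq (lo' := (e + 2) / 2) (hi' := m - 1) (fun i => by omega),
      card_filter_Icc_eq (lo' := (2 * e + 3) / 3) (hi' := m - 1) (fun i => by omega),
      card_filter_Icc_eq (lo' := (e + 2) / 3) (hi' := (e - 1) / 2) (fun i => by omega)]
    interval_cases h : e % 6 <;> omega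
  rcases lt_or_ge e (2 * m) with h₃ | h₃
  · rw [card_filter_Icc_eq (lo' := 1) (hi' := 0) (fun i => by omega),
      card_filter_Icc_eq (lo' := 2 * m - e) (hi' := (3 * m - e) / 3) (fun i => by omega),
      card_filter_Icc_eq (lo' := (e + 2) / 2) (hi' := m - 1) (fun i => by omega),
      card_filter_Icc_eq (lo' := (2 * e + 3) / 3) (hi' := m - 1) (fun i => by omega),
      card_filter_Icc_eq (lo' := (e + 2) / 3) (hi' := (e - 1) / 2) (fun i => by omega)]
    interval_cases h : e % 6 <;> omega
  · rw [card_filter_Icc_eq (lo' := 1) (hi' := 0) (fun i => by omega),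
      card_filter_Icc_eq (lo' := 1) (hi' := (3 * m - e) / 3) (fun i => by omega),
      card_filter_Icc_eq (lo' := 1) (hi' := 0) (fun i => by omega),
      card_filter_Icc_eq (lo' := 1) (hi' := 0) (fun i => by omega),
      card_filter_Icc_eq (lo' := max 1 ((e + 2) / 3)) (hi' := m - 1) (fun i => by omega)]
    omega

lemma count_leftShifts_two_mul_add_one (m e : ℕ) :
    (leftShifts m).count (2 * e + 1) = (rightShifts m).count (2 * e + 1) := by
  simp only [leftShifts, rightShifts, Multiset.count_add, count_sum_range' two_pos,
    count_sum_range' one_pos]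
  rw [card_filter_Icc_eq (lo' := max 1 (e + 2 - m)) (hi' := min (m / 2) ((e + 1) / 3))
      (fun i => by omega),
    card_filter_Icc_eq (lo' := 1) (hi' := 0) (fun i => by omega),
    card_filter_Icc_eq (lo' := 1) (hi' := 0) (fun i => by omega),
    card_filter_Icc_eq (lo' := (2 * e + 4) / 3) (hi' := min (m - 1) e) (fun i => by omega),
    card_filter_Icc_eq (lo' := 1) (hi' := 0) (fun i => by omega)]
  omega

lemma leftShifts_eq_rightShifts (m : ℕ) : leftShifts m = rightShifts m := by
  ext d
  rcases Nat.even_or_odd' d with ⟨e, rfl | rfl⟩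
  exacts [count_leftShifts_two_mul m e, count_leftShifts_two_mul_add_one m e]

theorem cancel_poch_general (μ : ℝ) (m : ℕ) :
    2 ^ ((m - 1) * (m - 2) / 2) *
        (∏ i ∈ Finset.Icc 1 (m / 2),
          (poch (μ / 2 + 3 * i - 1 / 2) (m - 2 * i) *
            poch (μ / 2 + 2 * m - i) (m - 2 * i + 1))) *
        ∏ i ∈ Finset.Icc 1 (m - 1), poch (μ / 2 + i + 1) (i - 1) =
      ∏ i ∈ Finset.Icc 1 (m - 1),
        (poch (μ + 2 * i + 1) (i - 1) * poch (μ / 2 + 2 * i + 1) i) := by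
  have hA : ∀ i ∈ Icc 1 (m / 2), μ / 2 + 3 * (i : ℝ) - 1 / 2 = (μ + (6 * i - 1 : ℕ)) / 2 := by
    intro i hi
    push_cast [show 1 ≤ 6 * i by grind]
    ring
  have hB : ∀ i ∈ Icc 1 (m / 2), μ / 2 + 2 * (m : ℝ) - i = (μ + (4 * m - 2 * i : ℕ)) / 2 := by
    intro i hi
    push_cast [show 2 * i ≤ 4 * m by grind]
    ring
  have shifts := congr_arg (fun M => (M.map fun d : ℕ => (μ + d) / 2).prod)
    (leftShifts_eq_rightShifts m)
  simp only [leftShifts, rightShifts, Multiset.map_add, Multiset.prod_add] at shifts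
  rw [prod_mul_distrib, prod_mul_distrib, prod_poch_eq_prod_map_sum_range' μ _ hA,
    prod_poch_eq_prod_map_sum_range' μ _ hB,
    prod_poch_eq_prod_map_sum_range' μ (a := fun i => 2 * i + 2) _ fun i _ => by push_cast; ring,
    prod_poch_eq_two_pow_mul_prod_map_sum_range' μ (a := fun i => 2 * i + 1) _
      fun i _ => by push_cast; ring,
    prod_poch_eq_prod_map_sum_range' μ (a := fun i => 4 * i + 2) _ fun i _ => by push_cast; ring,
    sum_Icc_sub_one, Nat.sub_sub, mul_assoc, shifts, mul_assoc]

/-- A Pochhammer product identity (denominator-cleared form of Lemma `CancelPoch`). -/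
theorem cancel_poch (μ : ℝ) (m : ℕ) (hm : 1 ≤ m) :
    2 ^ ((m - 1) * (m - 2) / 2) *
        (∏ i ∈ Finset.Icc 1 (m / 2),
          (poch (μ / 2 + 3 * i - 1 / 2) (m - 2 * i) *
            poch (μ / 2 + 2 * m - i) (m - 2 * i + 1))) *
        ∏ i ∈ Finset.Icc 1 (m - 1), poch (μ / 2 + i + 1) (i - 1) =
      ∏ i ∈ Finset.Icc 1 (m - 1),
        (poch (μ + 2 * i + 1) (i - 1) * poch (μ / 2 + 2 * i + 1) i) :=
  cancel_poch_general μ m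
end
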